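/- Let 𝔤₀ be a real Lie algebra with complexification 𝔤, and U ⊂ 𝔤* \ Sing 𝔤* an open set admitting r = corank c functionally independent holomorphic Casimir functions g₁,…,g_r of the linear Poisson bivector c. For g ∈ Z_c^{hol}(U) define g̃ = Σ_i conj(∂g/∂z_i) · z_i. Then each g̃ is a Casimir function of c̃ (i.e., c̃(g̃) = 0), and the space of smooth Casimir functions of c̃ over U is functionally generated by {g̃ : g ∈ Z_c^{hol}(U)} together with the antiholomorphic functions on U. -/

import Mathlib

open Module

abbrev Cn (n : ℕ) := Fin n → ℂ

/-- Wirtinger derivative ∂f/∂z_r of a (ℝ-differentiable) function f : ℂⁿ → ℂ. -/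
noncomputable def wirt {n : ℕ} (f : Cn n → ℂ) (z : Cn n) (r : Fin n) : ℂ :=
  (1/2) * (fderiv ℝ f z (Pi.single r 1) - Complex.I * fderiv ℝ f z (Pi.single r Complex.I))

section Aux

open Metric Complex Set

lemma single_decomp {n : ℕ} (i : Fin n) (c : ℂ) :
    (Pi.single i c : Cn n) = c.re • (Pi.single i (1:ℂ) : Cn n) + c.im • (Pi.single i Complex.I : Cn n) := by
  funext j
  rcases eq_or_ne j i with rfl | hj
  · simp [Complex.real_smul]
  · simp [Pi.single_eq_of_ne hj]

lemma single_I' {n : ℕ} (i : Fin n) :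
    (Pi.single i Complex.I : Cn n) = Complex.I • (Pi.single i (1:ℂ) : Cn n) := by
  funext j
  rcases eq_or_ne j i with rfl | hj
  · simp
  · simp [Pi.single_eq_of_ne hj]

lemma clm_eval {n : ℕ} (D : Cn n →L[ℝ] ℂ) (w : Cn n) :
    D w = ∑ i, ((w i).re • D (Pi.single i 1) + (w i).im • D (Pi.single i Complex.I)) := by
  have hw : w = ∑ i, Pi.single i (w i) := (Finset.univ_sum_single w).symm
  conv_lhs => rw [hw]
  rw [map_sum]
  exact Finset.sum_congr rfl fun i _ => by rw [single_decomp, map_add, map_smul, map_smul]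

lemma anti_key {n : ℕ} (D : Cn n →L[ℝ] ℂ) (w : Cn n) :
    D (Complex.I • w) + Complex.I * D w
      = ∑ i, Complex.I * ((D (Pi.single i 1) - Complex.I * D (Pi.single i Complex.I)) * w i) := by
  rw [clm_eval D (Complex.I • w), clm_eval D w, Finset.mul_sum, ← Finset.sum_add_distrib]
  refine Finset.sum_congr rfl fun i _ => ?_
  have h1 : (Complex.I • w) i = Complex.I * w i := rfl
  rw [h1]
  set A := D (Pi.single i 1)
  set B := D (Pi.single i Complex.I)
  have hw : ((w i).re : ℂ) + (w i).im * Complex.I = w i := Complex.re_add_im _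
  simp only [Complex.mul_re, Complex.mul_im, Complex.I_re, Complex.I_im, Complex.real_smul]
  push_cast
  linear_combination (Complex.I*(A - Complex.I*B)) * hw +
    (-(((w i).im:ℂ))*A + ((w i).re:ℂ)*B + Complex.I*((w i).im:ℂ)*B) * Complex.I_mul_I

lemma clmC_apply {n : ℕ} (T : Cn n →L[ℂ] ℂ) (v : Cn n) :
    T v = ∑ i, v i * T (Pi.single i 1) := by
  have hv : v = ∑ i, Pi.single i (v i) := (Finset.univ_sum_single v).symm
  conv_lhs => rw [hv]
  rw [map_sum]
  refine Finset.sum_congr rfl fun i _ => ?_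
  have h : (Pi.single i (v i) : Cn n) = v i • (Pi.single i (1:ℂ) : Cn n) := by
    funext j
    rcases eq_or_ne j i with rfl | hj
    · simp
    · simp [Pi.single_eq_of_ne hj]
  rw [h, map_smul, smul_eq_mul]

lemma line_hasDerivAt {n : ℕ} {U : Set (Cn n)} (hUopen : IsOpen U) {g : Cn n → ℂ}
    (hg : DifferentiableOn ℂ g U) (u : Cn n) (y : Cn n) (t : ℂ) (ht : u + t • y ∈ U) :
    HasDerivAt (fun s : ℂ => g (u + s • y)) (fderiv ℂ g (u + t • y) y) t := by
  have h1 : HasDerivAt (fun s : ℂ => u + s • y) ((1:ℂ) • y) t :=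
    ((hasDerivAt_id t).smul_const y).const_add u
  have h2 : DifferentiableAt ℂ g (u + t • y) := hg.differentiableAt (hUopen.mem_nhds ht)
  have := h2.hasFDerivAt.comp_hasDerivAt t h1
  rw [one_smul] at this
  exact this

lemma line_diffContOnCl {n : ℕ} {U : Set (Cn n)} (hUopen : IsOpen U) {g : Cn n → ℂ}
    (hg : DifferentiableOn ℂ g U) (u : Cn n) (y : Cn n) {δ : ℝ} (hδ0 : 0 < δ)
    (hmap : ∀ t : ℂ, t ∈ closedBall (0:ℂ) δ → u + t • y ∈ U) :
    DiffContOnCl ℂ (fun s : ℂ => g (u + s • y)) (ball 0 δ) := by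
  constructor
  · intro t ht
    exact (line_hasDerivAt hUopen hg u y t
      (hmap t (ball_subset_closedBall ht))).differentiableAt.differentiableWithinAt
  · rw [closure_ball _ hδ0.ne']
    intro t ht
    have hcont : ContinuousAt (fun s : ℂ => g (u + s • y)) t := by
      have h1 : Continuous (fun s : ℂ => u + s • y) :=
        continuous_const.add (continuous_id.smul continuous_const)
      have h2 : ContinuousAt g (u + t • y) :=
        hg.continuousOn.continuousAt (hUopen.mem_nhds (hmap t ht))
      exact ContinuousAt.comp (f := fun s : ℂ => u + s • y) h2 h1.continuousAt
    exact hcont.continuousWithinAt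

/-- A directional derivative of a holomorphic function of several complex variables is
again holomorphic (a Cauchy-integral argument; mathlib has no Hartogs-type results). -/
lemma dirderiv_diffAt {n : ℕ} {U : Set (Cn n)} (hUopen : IsOpen U) {g : Cn n → ℂ}
    (hg : DifferentiableOn ℂ g U) {z : Cn n} (hz : z ∈ U) (v : Cn n) :
    DifferentiableAt ℂ (fun w => fderiv ℂ g w v) z := by
  obtain ⟨R, hR0, hRU⟩ : ∃ R > 0, closedBall z R ⊆ U :=
    (nhds_basis_closedBall.mem_iff).1 (hUopen.mem_nhds hz)
  have gc : ContinuousOn g U := hg.continuousOn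
  obtain ⟨C, hC⟩ := (isCompact_closedBall z R).exists_bound_of_continuousOn (gc.mono hRU)
  have hC0 : 0 ≤ C := le_trans (norm_nonneg _) (hC z (mem_closedBall_self hR0.le))
  -- operator norm bound for fderiv on closedBall z (R/2)
  have hop : ∀ u ∈ closedBall z (R/2), ‖fderiv ℂ g u‖ ≤ 2*C/R := by
    intro u hu
    refine ContinuousLinearMap.opNorm_le_bound _ (by positivity) fun y => ?_
    rcases eq_or_ne y 0 with rfl | hy
    · simp
    have hny : 0 < ‖y‖ := norm_pos_iff.2 hy
    set δ : ℝ := (R/2) / ‖y‖ with hδdef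
    have hδ0 : 0 < δ := by positivity
    have hmap : ∀ t : ℂ, t ∈ closedBall (0:ℂ) δ → u + t • y ∈ closedBall z R := by
      intro t ht
      rw [mem_closedBall] at *
      have h2 : dist (u + t • y) u ≤ R/2 := by
        rw [dist_self_add_left, norm_smul]
        have h3 : ‖t‖ ≤ δ := by simpa [dist_eq_norm] using ht
        calc ‖t‖ * ‖y‖ ≤ δ * ‖y‖ := by gcongr
          _ = R/2 := div_mul_cancel₀ _ hny.ne'
      calc dist (u + t • y) z ≤ dist (u + t • y) u + dist u z := dist_triangle _ _ _
        _ ≤ R/2 + R/2 := add_le_add h2 hu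
        _ = R := by ring
    have hdc : DiffContOnCl ℂ (fun s : ℂ => g (u + s • y)) (ball 0 δ) :=
      line_diffContOnCl hUopen hg u y hδ0 (fun t ht => hRU (hmap t ht))
    have hb := Complex.norm_deriv_le_of_forall_mem_sphere_norm_le hδ0 hdc
      (fun t ht => hC _ (hmap t (sphere_subset_closedBall ht)))
    have hder : deriv (fun s : ℂ => g (u + s • y)) 0 = fderiv ℂ g u y := by
      have h0 : u + (0:ℂ) • y ∈ U := by
        simpa using hRU (closedBall_subset_closedBall (by linarith) hu)
      have := (line_hasDerivAt hUopen hg u y 0 h0).deriv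
      simpa using this
    rw [hder] at hb
    calc ‖fderiv ℂ g u y‖ ≤ C / δ := hb
      _ = 2*C/R * ‖y‖ := by rw [hδdef]; field_simp
  -- radius for the circle integral
  set ρ : ℝ := R / (4*(‖v‖+1)) with hρdef
  have hρ0 : 0 < ρ := by positivity
  have hρv : ∀ t : ℂ, ‖t‖ ≤ ρ → ‖t • v‖ ≤ R/4 := by
    intro t ht
    rw [norm_smul]
    calc ‖t‖ * ‖v‖ ≤ ρ * (‖v‖+1) := by
          apply mul_le_mul ht (by linarith) (norm_nonneg _) hρ0.le
      _ = R/4 := by rw [hρdef]; field_simp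
  have hmemw : ∀ w ∈ ball z (R/4), ∀ t : ℂ, ‖t‖ ≤ ρ → w + t • v ∈ closedBall z (R/2) := by
    intro w hw t ht
    rw [mem_ball] at hw
    rw [mem_closedBall]
    calc dist (w + t • v) z ≤ dist (w + t • v) w + dist w z := dist_triangle _ _ _
      _ ≤ R/4 + R/4 := by
          refine add_le_add ?_ hw.le
          rw [dist_self_add_left]; exact hρv t ht
      _ = R/2 := by ring
  have hUmem : ∀ w ∈ ball z (R/4), ∀ t : ℂ, ‖t‖ ≤ ρ → w + t • v ∈ U := by
    intro w hw t ht
    exact hRU (closedBall_subset_closedBall (by linarith) (hmemw w hw t ht))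
  -- representation formula
  have hrep : ∀ w ∈ ball z (R/4), fderiv ℂ g w v
      = (2 * Real.pi * Complex.I)⁻¹ • ∮ t in C(0, ρ), (t - 0) ^ (-2 : ℤ) • g (w + t • v) := by
    intro w hw
    have hdc : DiffContOnCl ℂ (fun s : ℂ => g (w + s • v)) (ball 0 ρ) :=
      line_diffContOnCl hUopen hg w v hρ0
        (fun t ht => hUmem w hw t (by simpa [dist_eq_norm] using ht))
    have := hdc.deriv_eq_smul_circleIntegral hρ0
    have hne : (2 * Real.pi * Complex.I : ℂ) ≠ 0 := by simp [Real.pi_ne_zero]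
    replace this : deriv (fun s : ℂ => g (w + s • v)) 0 = (2 * Real.pi * Complex.I)⁻¹ •
        ∮ t in C(0, ρ), (t - 0) ^ (-2 : ℤ) • g (w + t • v) := by
      rw [eq_inv_smul_iff₀ hne, ← this]
      congr 1; funext t; simp [zpow_neg]
    have hder : deriv (fun s : ℂ => g (w + s • v)) 0 = fderiv ℂ g w v := by
      have h0 : w + (0:ℂ) • v ∈ U := hUmem w hw 0 (by simp [hρ0.le])
      have := (line_hasDerivAt hUopen hg w v 0 h0).deriv
      simpa using this
    rw [hder] at this
    exact this
  -- differentiate under the integral sign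
  set c : ℝ → ℂ := fun θ => deriv (circleMap 0 ρ) θ * (circleMap 0 ρ θ - 0) ^ (-2 : ℤ) with hcdef
  set F : Cn n → ℝ → ℂ := fun w θ => c θ • g (w + circleMap 0 ρ θ • v) with hFdef
  set F' : Cn n → ℝ → (Cn n →L[ℂ] ℂ) :=
    fun w θ => c θ • fderiv ℂ g (w + circleMap 0 ρ θ • v) with hF'def
  have hcm : ∀ θ : ℝ, ‖circleMap 0 ρ θ‖ ≤ ρ := fun θ => by
    rw [norm_circleMap_zero, abs_of_pos hρ0]
  have hcirc_ne : ∀ θ : ℝ, circleMap 0 ρ θ ≠ 0 := fun θ => by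
    simpa using circleMap_ne_center (c := (0:ℂ)) hρ0.ne' (θ := θ)
  have hcc : Continuous c := by
    rw [hcdef]
    simp only [deriv_circleMap]
    exact ((continuous_circleMap 0 ρ).mul continuous_const).mul
      (((continuous_circleMap 0 ρ).sub continuous_const).zpow₀ (-2)
        (fun θ => Or.inl (by simpa using hcirc_ne θ)))
  have hcnorm : ∀ θ : ℝ, ‖c θ‖ = ρ⁻¹ := by
    intro θ
    rw [hcdef]
    simp only [deriv_circleMap, sub_zero, norm_mul, norm_zpow,
      Complex.norm_I, norm_circleMap_zero, abs_of_pos hρ0, mul_one]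
    rw [zpow_neg, zpow_two]
    field_simp
  have hlinecont : ∀ x, x ∈ ball z (R/4) → Continuous fun θ : ℝ => g (x + circleMap 0 ρ θ • v) := by
    intro x hx
    rw [continuous_iff_continuousAt]
    intro θ
    have h2 : ContinuousAt g (x + circleMap 0 ρ θ • v) :=
      gc.continuousAt (hUopen.mem_nhds (hUmem x hx _ (hcm θ)))
    exact ContinuousAt.comp (f := fun θ : ℝ => x + circleMap 0 ρ θ • v) h2
      (continuous_const.add ((continuous_circleMap 0 ρ).smul continuous_const)).continuousAt
  have hball : ball z (R/8) ⊆ ball z (R/4) := ball_subset_ball (by linarith)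
  have hF_meas : ∀ᶠ x in nhds z,
      MeasureTheory.AEStronglyMeasurable (F x)
        (MeasureTheory.volume.restrict (Set.uIoc (0:ℝ) (2*Real.pi))) := by
    filter_upwards [ball_mem_nhds z (show (0:ℝ) < R/4 by positivity)] with x hx
    exact ((hcc.smul (hlinecont x hx))).aestronglyMeasurable
  have hF_int : IntervalIntegrable (F z) MeasureTheory.volume 0 (2*Real.pi) :=
    (hcc.smul (hlinecont z (mem_ball_self (by positivity)))).intervalIntegrable _ _
  borelize (Cn n →L[ℂ] ℂ)
  have hF'_meas : MeasureTheory.AEStronglyMeasurable (F' z)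
      (MeasureTheory.volume.restrict (Set.uIoc (0:ℝ) (2*Real.pi))) := by
    have m1 : Measurable (fderiv ℂ g) := measurable_fderiv ℂ g
    have m2 : Measurable fun θ : ℝ => fderiv ℂ g (z + circleMap 0 ρ θ • v) :=
      m1.comp (continuous_const.add ((continuous_circleMap 0 ρ).smul continuous_const)).measurable
    have m3 : Measurable (F' z) := by
      have hsm : Continuous fun p : ℂ × (Cn n →L[ℂ] ℂ) => p.1 • p.2 := continuous_smul
      exact hsm.measurable.comp (hcc.measurable.prodMk m2)
    exact m3.aestronglyMeasurable
  have h_bound : ∀ᵐ θ ∂MeasureTheory.volume, θ ∈ Set.uIoc (0:ℝ) (2*Real.pi) →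
      ∀ x ∈ ball z (R/8), ‖F' x θ‖ ≤ ρ⁻¹ * (2*C/R) := by
    refine MeasureTheory.ae_of_all _ fun θ _ x hx => ?_
    rw [hF'def]
    simp only
    have h5 : ‖fderiv ℂ g (x + circleMap 0 ρ θ • v)‖ ≤ 2*C/R :=
      hop _ (hmemw x (hball hx) _ (hcm θ))
    refine le_trans (ContinuousLinearMap.opNorm_smul_le _ _) ?_
    rw [hcnorm]
    exact mul_le_mul_of_nonneg_left h5 (by positivity)
  have h_diff : ∀ᵐ θ ∂MeasureTheory.volume, θ ∈ Set.uIoc (0:ℝ) (2*Real.pi) →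
      ∀ x ∈ ball z (R/8), HasFDerivAt (fun w => F w θ) (F' x θ) x := by
    refine MeasureTheory.ae_of_all _ fun θ _ x hx => ?_
    have hu : x + circleMap 0 ρ θ • v ∈ U := hUmem x (hball hx) _ (hcm θ)
    have h0 : HasFDerivAt (fun w : Cn n => w + circleMap 0 ρ θ • v)
        (ContinuousLinearMap.id ℂ (Cn n)) x := (hasFDerivAt_id x).add_const _
    have h1 := (hg.differentiableAt (hUopen.mem_nhds hu)).hasFDerivAt.comp x h0
    have h2 := h1.const_smul (c θ)
    rw [ContinuousLinearMap.comp_id] at h2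
    exact h2
  have hFD := intervalIntegral.hasFDerivAt_integral_of_dominated_of_fderiv_le
    (𝕜 := ℂ) (μ := MeasureTheory.volume) (a := 0) (b := 2*Real.pi)
    (bound := fun _ => ρ⁻¹ * (2*C/R)) (ball_mem_nhds z (show (0:ℝ) < R/8 by positivity))
    hF_meas hF_int hF'_meas h_bound intervalIntegrable_const h_diff
  have hΦeq : ∀ w : Cn n, (∮ t in C(0, ρ), (t - 0) ^ (-2 : ℤ) • g (w + t • v))
      = ∫ θ in (0:ℝ)..(2*Real.pi), F w θ := by
    intro w
    rw [circleIntegral]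
    refine intervalIntegral.integral_congr fun θ _ => ?_
    rw [hFdef]
    simp only [smul_smul, hcdef]
  have hdint : DifferentiableAt ℂ
      (fun w : Cn n => (2 * Real.pi * Complex.I : ℂ)⁻¹ •
        ∮ t in C(0, ρ), (t - 0) ^ (-2 : ℤ) • g (w + t • v)) z := by
    have h3 : DifferentiableAt ℂ (fun x : Cn n => ∫ θ in (0:ℝ)..(2*Real.pi), F x θ) z :=
      hFD.differentiableAt
    have h4 := h3.const_smul ((2 * Real.pi * Complex.I : ℂ)⁻¹)
    have heq : (fun w : Cn n => (2 * Real.pi * Complex.I : ℂ)⁻¹ •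
        ∮ t in C(0, ρ), (t - 0) ^ (-2 : ℤ) • g (w + t • v))
        = fun w : Cn n => (2 * Real.pi * Complex.I : ℂ)⁻¹ •
            ∫ θ in (0:ℝ)..(2*Real.pi), F w θ := by
      funext w; rw [hΦeq]
    rw [heq]
    exact h4
  exact hdint.congr_of_eventuallyEq
    (Filter.eventuallyEq_of_mem (ball_mem_nhds z (by positivity)) hrep)

lemma tilde_fderiv_eval {n : ℕ} {U : Set (Cn n)} (hUopen : IsOpen U) {g : Cn n → ℂ}
    (hg : DifferentiableOn ℂ g U) {z : Cn n} (hz : z ∈ U) :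
    ∃ q : Fin n → (Cn n →L[ℂ] ℂ),
      DifferentiableAt ℝ (fun w => ∑ i, (starRingEnd ℂ) (fderiv ℂ g w (Pi.single i 1)) * w i) z ∧
      ∀ u : Cn n,
        fderiv ℝ (fun w => ∑ i, (starRingEnd ℂ) (fderiv ℂ g w (Pi.single i 1)) * w i) z u
          = ∑ i, ((starRingEnd ℂ) (fderiv ℂ g z (Pi.single i 1)) * u i
              + z i * (starRingEnd ℂ) (q i u)) := by
  set q : Fin n → (Cn n →L[ℂ] ℂ) :=
    fun i => fderiv ℂ (fun w => fderiv ℂ g w (Pi.single i 1)) z with hq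
  refine ⟨q, ?_⟩
  have hterm : ∀ i : Fin n,
      HasFDerivAt (fun w : Cn n => (starRingEnd ℂ) (fderiv ℂ g w (Pi.single i 1)) * w i)
      ((starRingEnd ℂ) (fderiv ℂ g z (Pi.single i 1)) • (ContinuousLinearMap.proj i : Cn n →L[ℝ] ℂ)
        + z i • ((Complex.conjCLE : ℂ →L[ℝ] ℂ).comp ((q i).restrictScalars ℝ))) z := by
    intro i
    have h1 : HasFDerivAt (fun w => fderiv ℂ g w (Pi.single i 1)) (q i) z :=
      (dirderiv_diffAt hUopen hg hz _).hasFDerivAt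
    have h2 := ((Complex.conjCLE : ℂ →L[ℝ] ℂ).hasFDerivAt).comp z (h1.restrictScalars ℝ)
    have h3 : HasFDerivAt (fun w : Cn n => w i) (ContinuousLinearMap.proj i : Cn n →L[ℝ] ℂ) z :=
      (ContinuousLinearMap.proj i : Cn n →L[ℝ] ℂ).hasFDerivAt
    have h4 := h2.mul h3
    exact h4
  have hD := HasFDerivAt.fun_sum (fun i (_ : i ∈ Finset.univ) => hterm i)
  refine ⟨hD.differentiableAt, fun u => ?_⟩
  rw [hD.fderiv]
  simp only [ContinuousLinearMap.sum_apply, ContinuousLinearMap.add_apply,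
    ContinuousLinearMap.coe_smul', Pi.smul_apply, ContinuousLinearMap.proj_apply,
    ContinuousLinearMap.comp_apply, ContinuousLinearMap.coe_restrictScalars',
    smul_eq_mul]
  refine Finset.sum_congr rfl fun i _ => ?_
  simp

lemma wirt_from_eval {n : ℕ} (f : Cn n → ℂ) (z : Cn n) (d : Fin n → ℂ)
    (q : Fin n → (Cn n →L[ℂ] ℂ))
    (heval : ∀ u : Cn n, fderiv ℝ f z u
      = ∑ i, ((starRingEnd ℂ) (d i) * u i + z i * (starRingEnd ℂ) (q i u))) :
    ∀ i, wirt f z i = (starRingEnd ℂ) (d i) := by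
  intro i0
  have hA : fderiv ℝ f z (Pi.single i0 (1:ℂ))
      = (starRingEnd ℂ) (d i0) + ∑ i, z i * (starRingEnd ℂ) (q i (Pi.single i0 1)) := by
    rw [heval, Finset.sum_add_distrib]
    congr 1
    rw [Finset.sum_eq_single i0]
    · simp
    · intro b _ hb
      simp [Pi.single_eq_of_ne hb]
    · simp
  have hB : fderiv ℝ f z (Pi.single i0 (Complex.I))
      = (starRingEnd ℂ) (d i0) * Complex.I
        - Complex.I * ∑ i, z i * (starRingEnd ℂ) (q i (Pi.single i0 1)) := by
    rw [heval, Finset.sum_add_distrib]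
    have h1 : ∑ i, (starRingEnd ℂ) (d i) * (Pi.single i0 Complex.I : Cn n) i
        = (starRingEnd ℂ) (d i0) * Complex.I := by
      rw [Finset.sum_eq_single i0]
      · simp
      · intro b _ hb
        simp [Pi.single_eq_of_ne hb]
      · simp
    have h2 : ∑ i, z i * (starRingEnd ℂ) (q i (Pi.single i0 Complex.I))
        = - Complex.I * ∑ i, z i * (starRingEnd ℂ) (q i (Pi.single i0 1)) := by
      have hterm : ∀ i : Fin n, z i * (starRingEnd ℂ) (q i (Pi.single i0 Complex.I))
          = -Complex.I * (z i * (starRingEnd ℂ) (q i (Pi.single i0 1))) := by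
        intro i
        rw [single_I', map_smul, smul_eq_mul, map_mul, Complex.conj_I]
        ring
      rw [Finset.sum_congr rfl (fun i _ => hterm i), ← Finset.mul_sum]
    rw [h1, h2]; ring
  rw [wirt, hA, hB]
  set S := ∑ i, z i * (starRingEnd ℂ) (q i (Pi.single i0 1))
  linear_combination ((1/2) * (S - (starRingEnd ℂ) (d i0))) * Complex.I_mul_I

lemma anti_from_eval {n : ℕ} (f : Cn n → ℂ) (z : Cn n) (d : Fin n → ℂ)
    (q : Fin n → (Cn n →L[ℂ] ℂ))
    (heval : ∀ u : Cn n, fderiv ℝ f z u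
      = ∑ i, ((starRingEnd ℂ) (d i) * u i + z i * (starRingEnd ℂ) (q i u))) :
    ∀ w : Cn n, fderiv ℝ f z (Complex.I • w) + Complex.I * fderiv ℝ f z w
      = 2 * Complex.I * ∑ i, (starRingEnd ℂ) (d i) * w i := by
  intro w
  rw [heval, heval, Finset.mul_sum, Finset.mul_sum, ← Finset.sum_add_distrib]
  refine Finset.sum_congr rfl fun i _ => ?_
  have hq : q i (Complex.I • w) = Complex.I * (q i w) := by
    rw [map_smul, smul_eq_mul]
  have hw : (Complex.I • w) i = Complex.I * w i := rfl
  rw [hq, hw, map_mul, Complex.conj_I]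
  ring

lemma kernel_span {n r : ℕ} (A : Matrix (Fin n) (Fin n) ℂ) (hrank : A.rank + r = n)
    (u : Fin r → (Fin n → ℂ)) (hindep : LinearIndependent ℂ u)
    (humem : ∀ m j, ∑ i, A i j * u m i = 0)
    (x : Fin n → ℂ) (hx : ∀ j, ∑ i, A i j * x i = 0) :
    ∃ c : Fin r → ℂ, ∑ m, c m • u m = x := by
  set K := LinearMap.ker (Matrix.mulVecLin A.transpose) with hKdef
  have hmemK : ∀ y : Fin n → ℂ, (∀ j, ∑ i, A i j * y i = 0) → y ∈ K := by
    intro y hy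
    rw [hKdef, LinearMap.mem_ker, Matrix.mulVecLin_apply]
    funext j
    rw [Matrix.mulVec, dotProduct]
    simpa [Matrix.transpose_apply, mul_comm] using hy j
  have hK : finrank ℂ K = r := by
    show finrank ℂ (LinearMap.ker (Matrix.mulVecLin A.transpose)) = r
    have h1 := LinearMap.finrank_range_add_finrank_ker (Matrix.mulVecLin A.transpose)
    rw [Module.finrank_fin_fun] at h1
    have h2 : finrank ℂ (LinearMap.range (Matrix.mulVecLin A.transpose)) = A.rank := by
      rw [← Matrix.rank_transpose A]; rfl
    rw [h2] at h1
    omega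
  have hle : Submodule.span ℂ (Set.range u) ≤ K := by
    rw [Submodule.span_le]
    rintro _ ⟨m, rfl⟩
    exact hmemK (u m) (humem m)
  have hfr : finrank ℂ (Submodule.span ℂ (Set.range u)) = r := by
    rw [finrank_span_eq_card hindep, Fintype.card_fin]
  have heq : Submodule.span ℂ (Set.range u) = K :=
    Submodule.eq_of_le_of_finrank_le hle (by rw [hK, hfr])
  have hxK : x ∈ Submodule.span ℂ (Set.range u) := by rw [heq]; exact hmemK x hx
  exact (Submodule.mem_span_range_iff_exists_fun ℂ).1 hxK

end Aux

theorem stmt17 (n r : ℕ) (L : Type*) [LieRing L] [LieAlgebra ℝ L]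
    (e : Basis (Fin n) ℝ L)
    (s : Fin n → Fin n → Fin n → ℝ)
    (hs : ∀ i j k, s i j k = e.repr ⁅e i, e j⁆ k)
    (Mmat : Cn n → Matrix (Fin n) (Fin n) ℂ)
    (hM : ∀ w, Mmat w = Matrix.of fun i j => ∑ k, (s i j k : ℂ) * w k)
    (Rmax : ℕ) (hle : ∀ w, (Mmat w).rank ≤ Rmax) (hex : ∃ w, (Mmat w).rank = Rmax)
    (hr : r + Rmax = n)
    (U : Set (Cn n)) (hUopen : IsOpen U) (hU : ∀ z ∈ U, (Mmat z).rank = Rmax)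
    (G : Fin r → (Cn n → ℂ))
    (hGdiff : ∀ m, DifferentiableOn ℂ (G m) U)
    (hGcas : ∀ m, ∀ z ∈ U, ∀ j,
      ∑ i, (∑ k, (s i j k : ℂ) * z k) * (fderiv ℂ (G m) z (Pi.single i 1)) = 0)
    (hGind : ∀ z ∈ U, LinearIndependent ℂ fun m => fderiv ℂ (G m) z)
    (tilde : (Cn n → ℂ) → (Cn n → ℂ))
    (htilde : ∀ g z, tilde g z
      = ∑ i, (starRingEnd ℂ) (fderiv ℂ g z (Pi.single i 1)) * z i) :
    (∀ g : Cn n → ℂ, DifferentiableOn ℂ g U →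
      (∀ z ∈ U, ∀ j, ∑ i, (∑ k, (s i j k : ℂ) * z k) * fderiv ℂ g z (Pi.single i 1) = 0) →
      ∀ z ∈ U, ∀ j,
        ∑ i, (∑ k, (s i j k : ℂ) * (starRingEnd ℂ) (z k)) * wirt (tilde g) z i = 0) ∧
    (∀ f : Cn n → ℂ, ContDiffOn ℝ (⊤ : ℕ∞) f U →
      (∀ z ∈ U, ∀ j,
        ∑ i, (∑ k, (s i j k : ℂ) * (starRingEnd ℂ) (z k)) * wirt f z i = 0) →
      ∀ z ∈ U, (fderiv ℝ f z) ∈ Submodule.span ℂ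
        ({D : Cn n →L[ℝ] ℂ | ∃ g : Cn n → ℂ, DifferentiableOn ℂ g U ∧
            (∀ w ∈ U, ∀ j,
              ∑ i, (∑ k, (s i j k : ℂ) * w k) * fderiv ℂ g w (Pi.single i 1) = 0) ∧
            D = fderiv ℝ (tilde g) z}
          ∪ {D : Cn n →L[ℝ] ℂ | ∀ w, D (Complex.I • w) = - (Complex.I * D w)})) := by
  have hconjsum : ∀ (z : Cn n) (j : Fin n) (i : Fin n),
      (∑ k, (s i j k : ℂ) * (starRingEnd ℂ) (z k))
        = (starRingEnd ℂ) (∑ k, (s i j k : ℂ) * z k) := by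
    intro z j i
    rw [map_sum]
    exact Finset.sum_congr rfl fun k _ => by rw [map_mul, Complex.conj_ofReal]
  constructor
  · -- Part 1
    intro g hgdiff hgcas z hz j
    have htl : tilde g = fun w => ∑ i, (starRingEnd ℂ) (fderiv ℂ g w (Pi.single i 1)) * w i :=
      funext fun w => htilde g w
    obtain ⟨q, hdiff, heval⟩ := tilde_fderiv_eval hUopen hgdiff hz
    have heval' : ∀ u : Cn n, fderiv ℝ (tilde g) z u
        = ∑ i, ((starRingEnd ℂ) (fderiv ℂ g z (Pi.single i 1)) * u i
            + z i * (starRingEnd ℂ) (q i u)) := by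
      rw [htl]; exact heval
    have hwirt := wirt_from_eval (tilde g) z (fun i => fderiv ℂ g z (Pi.single i 1)) q heval'
    have hmain : ∑ i, (∑ k, (s i j k : ℂ) * (starRingEnd ℂ) (z k)) * wirt (tilde g) z i
        = (starRingEnd ℂ) (∑ i, (∑ k, (s i j k : ℂ) * z k) * fderiv ℂ g z (Pi.single i 1)) := by
      rw [map_sum]
      refine Finset.sum_congr rfl fun i _ => ?_
      rw [map_mul, hconjsum z j i, hwirt i]
    rw [hmain, hgcas z hz j, map_zero]
  · -- Part 2
    intro f _hf hcas z hz
    -- the matrix of the conjugated Poisson structure at z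
    set Amat : Matrix (Fin n) (Fin n) ℂ :=
      Matrix.of (fun i j => ∑ k, (s i j k : ℂ) * (starRingEnd ℂ) (z k)) with hAdef
    have hAeq : Amat = ((Mmat z).conjTranspose).transpose := by
      ext i j
      rw [hAdef]
      show (∑ k, (s i j k : ℂ) * (starRingEnd ℂ) (z k)) = _
      rw [Matrix.transpose_apply, Matrix.conjTranspose_apply, hM]
      show _ = (starRingEnd ℂ) (∑ k, (s i j k : ℂ) * z k)
      exact hconjsum z j i
    have harank : Amat.rank + r = n := by
      open scoped ComplexOrder in
      rw [hAeq, Matrix.rank_transpose, Matrix.rank_conjTranspose, hU z hz]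
      omega
    -- the family of conjugated gradients
    set u : Fin r → (Fin n → ℂ) :=
      fun m i => (starRingEnd ℂ) (fderiv ℂ (G m) z (Pi.single i 1)) with hudef
    have humem : ∀ m j, ∑ i, Amat i j * u m i = 0 := by
      intro m j
      have : ∑ i, Amat i j * u m i
          = (starRingEnd ℂ) (∑ i, (∑ k, (s i j k : ℂ) * z k) * fderiv ℂ (G m) z (Pi.single i 1)) := by
        rw [map_sum]
        refine Finset.sum_congr rfl fun i _ => ?_
        rw [map_mul, hudef]
        show (∑ k, (s i j k : ℂ) * (starRingEnd ℂ) (z k)) * _ = _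
        rw [hconjsum z j i]
      rw [this, hGcas m z hz j, map_zero]
    have hindep : LinearIndependent ℂ u := by
      rw [Fintype.linearIndependent_iff]
      intro c hc m
      have hzero : ∀ i, ∑ m', (starRingEnd ℂ) (c m') * fderiv ℂ (G m') z (Pi.single i 1) = 0 := by
        intro i
        have h5 := congrFun hc i
        simp only [Finset.sum_apply, Pi.smul_apply, smul_eq_mul, Pi.zero_apply] at h5
        have h6 := congrArg (starRingEnd ℂ) h5
        rw [map_sum, map_zero] at h6
        rw [← h6]
        refine Finset.sum_congr rfl fun m' _ => ?_
        rw [map_mul, hudef]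
        simp
      have hz2 : (∑ m', (starRingEnd ℂ) (c m') • fderiv ℂ (G m') z) = 0 := by
        refine ContinuousLinearMap.ext fun y => ?_
        rw [ContinuousLinearMap.sum_apply]
        simp only [ContinuousLinearMap.coe_smul', Pi.smul_apply, smul_eq_mul,
          ContinuousLinearMap.zero_apply]
        have hrw : ∀ m' : Fin r, (starRingEnd ℂ) (c m') * fderiv ℂ (G m') z y
            = ∑ i, y i * ((starRingEnd ℂ) (c m') * fderiv ℂ (G m') z (Pi.single i 1)) := by
          intro m'
          rw [clmC_apply (fderiv ℂ (G m') z) y, Finset.mul_sum]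
          exact Finset.sum_congr rfl fun i _ => by ring
        rw [Finset.sum_congr rfl (fun m' _ => hrw m'), Finset.sum_comm]
        refine Finset.sum_eq_zero fun i _ => ?_
        rw [← Finset.mul_sum, hzero i, mul_zero]
      have := Fintype.linearIndependent_iff.1 (hGind z hz) (fun m' => (starRingEnd ℂ) (c m')) hz2 m
      simpa using congrArg (starRingEnd ℂ) this
    -- wirt f z lies in the kernel, hence in the span of the u's
    have hxker : ∀ j, ∑ i, Amat i j * wirt f z i = 0 := fun j => hcas z hz j
    obtain ⟨c, hcu⟩ := kernel_span Amat harank u hindep humem (wirt f z) hxker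
    have hcui : ∀ i, ∑ m, c m * u m i = wirt f z i := by
      intro i
      have := congrFun hcu i
      simpa [Finset.sum_apply] using this
    -- fderiv data for the tilde's of the G m
    have hTm := fun m => tilde_fderiv_eval hUopen (hGdiff m) hz
    choose q hqdiff hqeval using hTm
    have hevalm : ∀ m (w : Cn n), fderiv ℝ (tilde (G m)) z w
        = ∑ i, ((starRingEnd ℂ) (fderiv ℂ (G m) z (Pi.single i 1)) * w i
            + z i * (starRingEnd ℂ) (q m i w)) := by
      intro m
      have htl : tilde (G m)
          = fun w => ∑ i, (starRingEnd ℂ) (fderiv ℂ (G m) w (Pi.single i 1)) * w i :=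
        funext fun w => htilde (G m) w
      rw [htl]
      exact hqeval m
    -- the remainder is antiholomorphic
    set E : Cn n →L[ℝ] ℂ := fderiv ℝ f z - ∑ m, c m • fderiv ℝ (tilde (G m)) z with hEdef
    have hEanti : ∀ w, E (Complex.I • w) = - (Complex.I * E w) := by
      intro w
      have hEapp : ∀ w' : Cn n, E w'
          = fderiv ℝ f z w' - ∑ m, c m * fderiv ℝ (tilde (G m)) z w' := by
        intro w'
        rw [hEdef]
        simp [ContinuousLinearMap.sum_apply]
      -- key identities
      have h6 : fderiv ℝ f z (Complex.I • w) + Complex.I * fderiv ℝ f z w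
          = 2 * Complex.I * ∑ i, wirt f z i * w i := by
        rw [anti_key, Finset.mul_sum]
        refine Finset.sum_congr rfl fun i _ => ?_
        rw [wirt]
        ring
      have h7 : ∀ m, fderiv ℝ (tilde (G m)) z (Complex.I • w)
            + Complex.I * fderiv ℝ (tilde (G m)) z w
          = 2 * Complex.I * ∑ i, u m i * w i := by
        intro m
        exact anti_from_eval (tilde (G m)) z (fun i => fderiv ℂ (G m) z (Pi.single i 1)) (q m)
          (hevalm m) w
      have h8 : ∑ m, c m * (2 * Complex.I * ∑ i, u m i * w i)
          = 2 * Complex.I * ∑ i, wirt f z i * w i := by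
        have hper : ∀ m, c m * (2 * Complex.I * ∑ i, u m i * w i)
            = ∑ i, 2 * Complex.I * (c m * (u m i * w i)) := by
          intro m
          rw [Finset.mul_sum, Finset.mul_sum]
          exact Finset.sum_congr rfl fun i _ => by ring
        rw [Finset.sum_congr rfl (fun m _ => hper m), Finset.sum_comm, Finset.mul_sum]
        refine Finset.sum_congr rfl fun i _ => ?_
        rw [← hcui i, Finset.sum_mul, Finset.mul_sum]
        exact Finset.sum_congr rfl fun m _ => by ring
      have hkey : E (Complex.I • w) + Complex.I * E w = 0 := by
        rw [hEapp, hEapp]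
        have hc1 : ∑ m, c m * fderiv ℝ (tilde (G m)) z (Complex.I • w)
            + Complex.I * ∑ m, c m * fderiv ℝ (tilde (G m)) z w
            = ∑ m, c m * (fderiv ℝ (tilde (G m)) z (Complex.I • w)
                + Complex.I * fderiv ℝ (tilde (G m)) z w) := by
          rw [Finset.mul_sum, ← Finset.sum_add_distrib]
          exact Finset.sum_congr rfl fun m _ => by ring
        have hc2 : ∑ m, c m * (fderiv ℝ (tilde (G m)) z (Complex.I • w)
              + Complex.I * fderiv ℝ (tilde (G m)) z w)
            = 2 * Complex.I * ∑ i, wirt f z i * w i := by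
          rw [Finset.sum_congr rfl (fun m _ => by rw [h7 m])]
          exact h8
        linear_combination h6 - (hc1.trans hc2)
      linear_combination hkey
    -- assemble the membership
    have hsplit : fderiv ℝ f z = (∑ m, c m • fderiv ℝ (tilde (G m)) z) + E := by
      rw [hEdef]; abel
    rw [hsplit]
    refine Submodule.add_mem _ ?_ ?_
    · refine Submodule.sum_mem _ fun m _ => Submodule.smul_mem _ _ ?_
      refine Submodule.subset_span (Set.mem_union_left _ ?_)
      exact ⟨G m, hGdiff m, hGcas m, rfl⟩
    · exact Submodule.subset_span (Set.mem_union_right _ hEanti)
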